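/- Monotonicity in the zero-order coefficient: if f ≥ 0 and 0 < a < A, then w_{Ω,a,f} ≥ w_{Ω,A,f} m-a.e. on X. -/

import Mathlib

open MeasureTheory Filter
open scoped ENNReal

namespace AbsSob

variable {X : Type*} [MeasurableSpace X]

/-- Abstract Sobolev setting: a Riesz subspace `H` of `L²(X,m)` with the Stone
property (H1)-(H2), together with a gradient-like map `D` satisfying (D1)-(D4). -/
structure Setting (X : Type*) [MeasurableSpace X] (m : Measure X) where
  H : Set (X → ℝ)
  D : (X → ℝ) → X → ℝ
  zero_mem : (fun _ => (0 : ℝ)) ∈ H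
  add_mem : ∀ ⦃u v : X → ℝ⦄, u ∈ H → v ∈ H → u + v ∈ H
  smul_mem : ∀ (c : ℝ) ⦃u : X → ℝ⦄, u ∈ H → c • u ∈ H
  sup_mem : ∀ ⦃u v : X → ℝ⦄, u ∈ H → v ∈ H → u ⊔ v ∈ H
  inf_mem : ∀ ⦃u v : X → ℝ⦄, u ∈ H → v ∈ H → u ⊓ v ∈ H
  stone : ∀ ⦃u : X → ℝ⦄, u ∈ H → u ⊓ 1 ∈ H
  memL2 : ∀ ⦃u : X → ℝ⦄, u ∈ H → MemLp u 2 m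
  gradL2 : ∀ ⦃u : X → ℝ⦄, u ∈ H → MemLp (D u) 2 m
  D1 : ∀ ⦃u : X → ℝ⦄, u ∈ H → ∀ᵐ x ∂m, 0 ≤ D u x
  D2 : ∀ ⦃u v : X → ℝ⦄, u ∈ H → v ∈ H → ∀ᵐ x ∂m, D (u + v) x ≤ D u x + D v x
  D3 : ∀ (c : ℝ) ⦃u : X → ℝ⦄, u ∈ H → ∀ᵐ x ∂m, D (c • u) x = |c| * D u x
  D4 : ∀ ⦃u v : X → ℝ⦄, u ∈ H → v ∈ H → ∀ᵐ x ∂m,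
      D (u ⊔ v) x = if v x < u x then D u x else D v x

variable {m : Measure X}

/-- Square of the `H`-norm: `‖u‖_H² = ‖u‖²_{L²} + ‖Du‖²_{L²}`. -/
noncomputable def normHsq (S : Setting X m) (u : X → ℝ) : ℝ :=
  ∫ x, (u x) ^ 2 ∂m + ∫ x, (S.D u x) ^ 2 ∂m

/-- Sobolev functions vanishing (m-a.e.) outside `Ω`. -/
def H0 (S : Setting X m) (Ω : Set X) : Set (X → ℝ) :=
  {u | u ∈ S.H ∧ ∀ᵐ x ∂m, x ∉ Ω → u x = 0}

/-- The functional `F^{a,f}(u) = ½∫|Du|² + (a/2)∫u² − ∫ f u`. -/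
noncomputable def F (S : Setting X m) (a : ℝ) (f : X → ℝ) (u : X → ℝ) : ℝ :=
  (1 / 2) * ∫ x, (S.D u x) ^ 2 ∂m + (a / 2) * ∫ x, (u x) ^ 2 ∂m - ∫ x, f x * u x ∂m

/-- `w` is a minimizer of `F^{a,f}` over `H₀(Ω)`. -/
def IsMinimizer (S : Setting X m) (Ω : Set X) (a : ℝ) (f : X → ℝ) (w : X → ℝ) : Prop :=
  w ∈ H0 S Ω ∧ ∀ u ∈ H0 S Ω, F S a f w ≤ F S a f u

/-- (ℋ2): the inclusion `H ↪ L²` is compact. -/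
def CompactEmbedding (S : Setting X m) : Prop :=
  ∀ u : ℕ → X → ℝ, (∀ n, u n ∈ S.H) → (∃ C : ℝ, ∀ n, normHsq S (u n) ≤ C) →
    ∃ (φ : ℕ → ℕ) (v : X → ℝ), StrictMono φ ∧ v ∈ S.H ∧
      Tendsto (fun k => ∫ x, (u (φ k) x - v x) ^ 2 ∂m) atTop (nhds 0)

/-- (ℋ3): lower semicontinuity of the gradient energy along `L²`-convergent
`H`-bounded sequences, whose limit moreover belongs to `H`. -/
def GradLSC (S : Setting X m) : Prop :=
  ∀ (u : ℕ → X → ℝ) (v : X → ℝ), (∀ n, u n ∈ S.H) →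
    (∃ C : ℝ, ∀ n, normHsq S (u n) ≤ C) →
    Tendsto (fun n => ∫ x, (u n x - v x) ^ 2 ∂m) atTop (nhds 0) →
    v ∈ S.H ∧ ∫ x, (S.D v x) ^ 2 ∂m ≤ liminf (fun n => ∫ x, (S.D (u n) x) ^ 2 ∂m) atTop

/-- Energy sets: Borel sets coinciding up to an `m`-null set with `{w_Ω > 0}`. -/
def IsEnergySet (S : Setting X m) (Ω : Set X) : Prop :=
  MeasurableSet Ω ∧ ∃ w, IsMinimizer S Ω 1 (fun _ => 1) w ∧ m (Ω \ {x | 0 < w x}) = 0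

/-!
Testing the minimality of `w` against `w ⊔ 0` shows `w ≥ 0`, because `a > 0` and `f ≥ 0`.
Next test `w` against `w ⊔ W` for `F^a` and `W` against `w ⊓ W` for `F^A`. Adding the two
inequalities, the gradient terms cancel by (D4) and the linear terms since `max + min` is the
sum, leaving `(A - a) ∫ W² ≤ (A - a) ∫ (w ⊓ W)²`. Since `w ≥ 0` we have `(w ⊓ W)² ≤ W²` pointwise, so the
two agree a.e., and that forces `W ≤ w` a.e.
-/

lemma sq_max_zero_le_sq (t : ℝ) : max t 0 ^ 2 ≤ t ^ 2 := by
  rw [← sq_abs t]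
  exact pow_le_pow_left₀ (le_max_right _ _) (max_le (le_abs_self t) (abs_nonneg t)) 2

lemma nonneg_of_sq_max_zero_eq_sq {t : ℝ} (h : max t 0 ^ 2 = t ^ 2) : 0 ≤ t := by
  by_contra! ht
  rw [max_eq_right ht.le] at h
  nlinarith

lemma sq_min_le_sq_of_nonneg {s : ℝ} (hs : 0 ≤ s) (t : ℝ) : min s t ^ 2 ≤ t ^ 2 := by
  rcases le_total s t with hst | hts
  · rw [min_eq_left hst]
    exact pow_le_pow_left₀ hs hst 2
  · rw [min_eq_right hts]

lemma le_of_sq_min_eq_sq {s t : ℝ} (hs : 0 ≤ s) (h : min s t ^ 2 = t ^ 2) : t ≤ s := by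
  by_contra! hst
  rw [min_eq_left hst.le] at h
  nlinarith

lemma apply_max_add_apply_min (g : ℝ → ℝ) (s t : ℝ) :
    g (max s t) + g (min s t) = g s + g t := by
  rcases le_total s t with hst | hts
  · rw [max_eq_right hst, min_eq_left hst, add_comm]
  · rw [max_eq_left hts, min_eq_right hts]

lemma ae_eq_of_ae_le_of_integral_le {φ ψ : X → ℝ} (hφ : Integrable φ m) (hψ : Integrable ψ m)
    (hle : φ ≤ᵐ[m] ψ) (hint : ∫ x, ψ x ∂m ≤ ∫ x, φ x ∂m) : φ =ᵐ[m] ψ :=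
  (integral_eq_iff_of_ae_le hφ hψ hle).1 (le_antisymm (integral_mono_ae hφ hψ hle) hint)

lemma integral_add_integral_eq_of_ae {φ₁ φ₂ ψ₁ ψ₂ : X → ℝ}
    (hφ₁ : Integrable φ₁ m) (hφ₂ : Integrable φ₂ m) (hψ₁ : Integrable ψ₁ m)
    (hψ₂ : Integrable ψ₂ m) (h : ∀ᵐ x ∂m, φ₁ x + φ₂ x = ψ₁ x + ψ₂ x) :
    ∫ x, φ₁ x ∂m + ∫ x, φ₂ x ∂m = ∫ x, ψ₁ x ∂m + ∫ x, ψ₂ x ∂m := by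
  rw [← integral_add hφ₁ hφ₂, ← integral_add hψ₁ hψ₂]
  exact integral_congr_ae h

namespace Setting

variable (S : Setting X m) {u v : X → ℝ}

lemma integrable_sq (hu : u ∈ S.H) : Integrable (fun x => u x ^ 2) m :=
  (S.memL2 hu).integrable_sq

lemma integrable_D_sq (hu : u ∈ S.H) : Integrable (fun x => S.D u x ^ 2) m :=
  (S.gradL2 hu).integrable_sq

lemma zero_mem' : (0 : X → ℝ) ∈ S.H :=
  S.zero_mem

lemma ae_D_zero : ∀ᵐ x ∂m, S.D 0 x = 0 := by
  filter_upwards [S.D3 0 S.zero_mem'] with x hx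
  simpa using hx

lemma ae_D_neg (hu : u ∈ S.H) : ∀ᵐ x ∂m, S.D (-u) x = S.D u x := by
  filter_upwards [S.D3 (-1) hu] with x hx
  simpa using hx

lemma ae_D_inf (hu : u ∈ S.H) (hv : v ∈ S.H) :
    ∀ᵐ x ∂m, S.D (u ⊓ v) x = if u x < v x then S.D u x else S.D v x := by
  have hneg : ∀ {g : X → ℝ}, g ∈ S.H → -g ∈ S.H := fun hg => by
    simpa using S.smul_mem (-1) hg
  have hinf : u ⊓ v = -(-u ⊔ -v) := by rw [neg_sup, neg_neg, neg_neg]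
  filter_upwards [S.ae_D_neg (S.sup_mem (hneg hu) (hneg hv)), S.D4 (hneg hu) (hneg hv),
    S.ae_D_neg hu, S.ae_D_neg hv] with x hsup hmax hu' hv'
  rw [hinf, hsup, hmax]
  simp only [Pi.neg_apply, neg_lt_neg_iff, hu', hv']

lemma ae_sq_D_sup_add_sq_D_inf (hu : u ∈ S.H) (hv : v ∈ S.H) :
    ∀ᵐ x ∂m, S.D (u ⊔ v) x ^ 2 + S.D (u ⊓ v) x ^ 2 = S.D u x ^ 2 + S.D v x ^ 2 := by
  filter_upwards [S.D4 hu hv, S.D4 hv hu, S.ae_D_inf hu hv] with x huv hvu hinf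
  rcases lt_trichotomy (u x) (v x) with hlt | heq | hgt
  · rw [huv, hinf, if_neg hlt.not_gt, if_pos hlt, add_comm]
  -- on `{u = v}`, (D4) applied in both orders forces `D u = D v`
  · have hv : S.D (u ⊔ v) x = S.D v x := by rw [huv, if_neg heq.not_gt]
    have hu : S.D (u ⊔ v) x = S.D u x := by rw [sup_comm, hvu, if_neg heq.not_lt]
    rw [hv, hinf, if_neg heq.not_lt, ← hu, hv]
  · rw [huv, hinf, if_pos hgt, if_neg hgt.not_gt]

lemma ae_sq_D_sup_zero_le (hu : u ∈ S.H) : ∀ᵐ x ∂m, S.D (u ⊔ 0) x ^ 2 ≤ S.D u x ^ 2 := by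
  filter_upwards [S.D4 hu S.zero_mem', S.ae_D_zero] with x hsup hzero
  rw [hsup]
  split_ifs
  · exact le_rfl
  · rw [hzero, sq, zero_mul]
    exact sq_nonneg _

end Setting

section Functional

variable {S : Setting X m} {Ω : Set X} {f u v w W : X → ℝ} {a A : ℝ}

lemma zero_mem_H0 : (0 : X → ℝ) ∈ H0 S Ω :=
  ⟨S.zero_mem', ae_of_all _ fun _ _ => rfl⟩

lemma sup_mem_H0 (hu : u ∈ H0 S Ω) (hv : v ∈ H0 S Ω) : u ⊔ v ∈ H0 S Ω :=
  ⟨S.sup_mem hu.1 hv.1, by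
    filter_upwards [hu.2, hv.2] with x hux hvx hx
    simp [hux hx, hvx hx]⟩

lemma inf_mem_H0 (hu : u ∈ H0 S Ω) (hv : v ∈ H0 S Ω) : u ⊓ v ∈ H0 S Ω :=
  ⟨S.inf_mem hu.1 hv.1, by
    filter_upwards [hu.2, hv.2] with x hux hvx hx
    simp [hux hx, hvx hx]⟩

lemma F_sup_add_F_inf (a A : ℝ) (hf : MemLp f 2 m) (hu : u ∈ S.H) (hv : v ∈ S.H) :
    F S a f (u ⊔ v) + F S A f (u ⊓ v) =
      F S a f u + F S A f v + (A - a) / 2 * (∫ x, (u ⊓ v) x ^ 2 ∂m - ∫ x, v x ^ 2 ∂m) := by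
  have hsup := S.sup_mem hu hv
  have hinf := S.inf_mem hu hv
  have hD := integral_add_integral_eq_of_ae (S.integrable_D_sq hsup) (S.integrable_D_sq hinf)
    (S.integrable_D_sq hu) (S.integrable_D_sq hv) (S.ae_sq_D_sup_add_sq_D_inf hu hv)
  have hsq := integral_add_integral_eq_of_ae (S.integrable_sq hsup) (S.integrable_sq hinf)
    (S.integrable_sq hu) (S.integrable_sq hv)
    (ae_of_all _ fun x => apply_max_add_apply_min (· ^ 2) (u x) (v x))
  have hlin := integral_add_integral_eq_of_ae (hf.integrable_mul (S.memL2 hsup))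
    (hf.integrable_mul (S.memL2 hinf)) (hf.integrable_mul (S.memL2 hu))
    (hf.integrable_mul (S.memL2 hv))
    (ae_of_all _ fun x => apply_max_add_apply_min (f x * ·) (u x) (v x))
  unfold F
  linear_combination (1 / 2) * hD + (a / 2) * hsq - hlin

lemma F_sup_zero_add_le (hf : MemLp f 2 m) (hf0 : ∀ᵐ x ∂m, 0 ≤ f x) (hu : u ∈ S.H) :
    F S a f (u ⊔ 0) + a / 2 * (∫ x, u x ^ 2 ∂m - ∫ x, (u ⊔ 0) x ^ 2 ∂m) ≤ F S a f u := by
  have hpos := S.sup_mem hu S.zero_mem'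
  have hD : ∫ x, S.D (u ⊔ 0) x ^ 2 ∂m ≤ ∫ x, S.D u x ^ 2 ∂m :=
    integral_mono_ae (S.integrable_D_sq hpos) (S.integrable_D_sq hu) (S.ae_sq_D_sup_zero_le hu)
  have hlin : ∫ x, f x * u x ∂m ≤ ∫ x, f x * (u ⊔ 0) x ∂m := by
    refine integral_mono_ae (hf.integrable_mul (S.memL2 hu))
      (hf.integrable_mul (S.memL2 hpos)) ?_
    filter_upwards [hf0] with x hfx
    exact mul_le_mul_of_nonneg_left (le_max_left _ _) hfx
  unfold F
  linarith

lemma IsMinimizer.ae_nonneg (ha : 0 < a) (hf : MemLp f 2 m) (hf0 : ∀ᵐ x ∂m, 0 ≤ f x)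
    (hw : IsMinimizer S Ω a f w) : ∀ᵐ x ∂m, 0 ≤ w x := by
  have hmin := hw.2 _ (sup_mem_H0 hw.1 zero_mem_H0)
  have hcmp := F_sup_zero_add_le (a := a) hf hf0 hw.1.1
  have hint : ∫ x, w x ^ 2 ∂m ≤ ∫ x, (w ⊔ 0) x ^ 2 ∂m := by
    have : a / 2 * (∫ x, w x ^ 2 ∂m - ∫ x, (w ⊔ 0) x ^ 2 ∂m) ≤ 0 := by linarith
    exact sub_nonpos.1 (nonpos_of_mul_nonpos_right this (by positivity))
  have hsq : (fun x => (w ⊔ 0) x ^ 2) =ᵐ[m] fun x => w x ^ 2 :=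
    ae_eq_of_ae_le_of_integral_le (S.integrable_sq (S.sup_mem hw.1.1 S.zero_mem'))
      (S.integrable_sq hw.1.1) (ae_of_all _ fun x => sq_max_zero_le_sq (w x)) hint
  filter_upwards [hsq] with x hx using nonneg_of_sq_max_zero_eq_sq hx

lemma IsMinimizer.integral_sq_le_integral_sq_inf (haA : a < A) (hf : MemLp f 2 m)
    (hw : IsMinimizer S Ω a f w) (hW : IsMinimizer S Ω A f W) :
    ∫ x, W x ^ 2 ∂m ≤ ∫ x, (w ⊓ W) x ^ 2 ∂m := by
  have hsup := hw.2 _ (sup_mem_H0 hw.1 hW.1)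
  have hinf := hW.2 _ (inf_mem_H0 hw.1 hW.1)
  have hsum := F_sup_add_F_inf a A hf hw.1.1 hW.1.1
  have : 0 ≤ (A - a) / 2 * (∫ x, (w ⊓ W) x ^ 2 ∂m - ∫ x, W x ^ 2 ∂m) := by linarith
  exact sub_nonneg.1 (nonneg_of_mul_nonneg_right this (by linarith))

end Functional

theorem statement_7_general {X : Type*} [MeasurableSpace X] {m : Measure X}
    (S : Setting X m) {Ω : Set X}
    {a A : ℝ} (ha : 0 < a) (haA : a < A)
    {f : X → ℝ} (hf : MemLp f 2 m) (hf0 : ∀ᵐ x ∂m, 0 ≤ f x)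
    {w W : X → ℝ} (hw : IsMinimizer S Ω a f w) (hW : IsMinimizer S Ω A f W) :
    ∀ᵐ x ∂m, W x ≤ w x := by
  have hw0 := hw.ae_nonneg ha hf hf0
  have hsq : (fun x => (w ⊓ W) x ^ 2) =ᵐ[m] fun x => W x ^ 2 :=
    ae_eq_of_ae_le_of_integral_le (S.integrable_sq (S.inf_mem hw.1.1 hW.1.1))
      (S.integrable_sq hW.1.1)
      (by filter_upwards [hw0] with x hx using sq_min_le_sq_of_nonneg hx (W x))
      (hw.integral_sq_le_integral_sq_inf haA hf hW)
  filter_upwards [hw0, hsq] with x hx hx' using le_of_sq_min_eq_sq hx hx'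

/-- monotonicity in the zero-order coefficient:
if `f ≥ 0` and `0 < a < A` then `w_{Ω,a,f} ≥ w_{Ω,A,f}` m-a.e. -/
theorem statement_7 {X : Type*} [MeasurableSpace X] {m : Measure X} [IsFiniteMeasure m]
    (S : Setting X m) {Ω : Set X} (hΩ : MeasurableSet Ω)
    {a A : ℝ} (ha : 0 < a) (haA : a < A)
    {f : X → ℝ} (hf : MemLp f 2 m) (hf0 : ∀ᵐ x ∂m, 0 ≤ f x)
    {w W : X → ℝ} (hw : IsMinimizer S Ω a f w) (hW : IsMinimizer S Ω A f W) :
    ∀ᵐ x ∂m, W x ≤ w x :=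
  statement_7_general S ha haA hf hf0 hw hW

end AbsSob
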